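/- With A, D, π, M, B as in the context, define linear maps f, g_L, g_R : Hom_k(M ⊗ D ⊗ A, B) → Hom_k(M ⊗ A, B) by f(ψ)(m ⊗ a) = ψ(m ⊗ π(a₍₁₎) ⊗ a₍₂₎), g_L(ψ)(m ⊗ a) = θ_B(d ↦ ψ(m ⊗ d ⊗ a)), and g_R(ψ)(m ⊗ a) = θ_B(d ↦ ψ(m₍₀₎ ⊗ π(m₍₁₎)d ⊗ a)); set K_L = range(f − g_L) and K_R = range(f − g_R). Define α, β : Hom_k(M ⊗ A, B) → Hom_k(M ⊗ A, B) by α(φ)(m ⊗ a) = φ(m₍₀₎ ⊗ S(m₍₁₎)a) and β(ψ)(m ⊗ a) = ψ(m₍₀₎ ⊗ m₍₁₎a). Then α(K_L) ⊆ K_R and β(K_R) ⊆ K_L; consequently, since α and β are mutually inverse, α induces a linear isomorphism Hom_k(M ⊗ A, B)/K_L ≅ Hom_k(M ⊗ A, B)/K_R. -/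

import Mathlib

/-!
STATEMENT 8: With a Hopf algebra morphism π : A → D, a right A-comodule M and a left
D-contramodule (B, θ_B): for the two coequalizer presentations with maps
f(ψ)(m⊗a) = ψ(m ⊗ π(a₍₁₎) ⊗ a₍₂₎), g_L(ψ)(m⊗a) = θ_B(d ↦ ψ(m ⊗ d ⊗ a)),
g_R(ψ)(m⊗a) = θ_B(d ↦ ψ(m₍₀₎ ⊗ π(m₍₁₎)d ⊗ a)), with K_L = range(f − g_L),
K_R = range(f − g_R), the maps α(φ)(m⊗a) = φ(m₍₀₎ ⊗ S(m₍₁₎)a) and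
β(ψ)(m⊗a) = ψ(m₍₀₎ ⊗ m₍₁₎a) satisfy α(K_L) ⊆ K_R and β(K_R) ⊆ K_L, and α induces a
linear isomorphism of the quotients.
-/

open TensorProduct LinearMap

noncomputable section

variable (k : Type*) [Field k]
variable (A : Type*) [Semiring A] [HopfAlgebra k A]
variable (D : Type*) [Semiring D] [HopfAlgebra k D]
variable (M : Type*) [AddCommGroup M] [Module k M]
variable (B : Type*) [AddCommGroup B] [Module k B]

def IsComodule {M : Type*} [AddCommGroup M] [Module k M]
    (ρ : M →ₗ[k] M ⊗[k] A) : Prop :=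
  ((TensorProduct.assoc k M A A).toLinearMap ∘ₗ (TensorProduct.map ρ LinearMap.id) ∘ₗ ρ
      = (TensorProduct.map LinearMap.id Coalgebra.comul) ∘ₗ ρ) ∧
  ((TensorProduct.rid k M).toLinearMap ∘ₗ
      (TensorProduct.map LinearMap.id Coalgebra.counit) ∘ₗ ρ = LinearMap.id)

def IsContramodule {B : Type*} [AddCommGroup B] [Module k B]
    (θ : (D →ₗ[k] B) →ₗ[k] B) : Prop :=
  (∀ Φ : D →ₗ[k] (D →ₗ[k] B),
      θ (θ ∘ₗ Φ) = θ ((TensorProduct.lift Φ.flip) ∘ₗ Coalgebra.comul)) ∧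
  (∀ b : B, θ ((LinearMap.toSpanSingleton k B b) ∘ₗ Coalgebra.counit) = b)

/-- `m ⊗ a ↦ m ⊗ (π(a₍₁₎) ⊗ a₍₂₎)`. -/
def tauF (π : A →ₗ[k] D) : (M ⊗[k] A) →ₗ[k] (M ⊗[k] (D ⊗[k] A)) :=
  TensorProduct.map LinearMap.id
    ((TensorProduct.map π LinearMap.id) ∘ₗ (Coalgebra.comul (R := k) (A := A)))

/-- `f(ψ)(m ⊗ a) = ψ(m ⊗ π(a₍₁₎) ⊗ a₍₂₎)`. -/
def fMap (π : A →ₗ[k] D) :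
    ((M ⊗[k] (D ⊗[k] A)) →ₗ[k] B) →ₗ[k] ((M ⊗[k] A) →ₗ[k] B) :=
  LinearMap.lcomp k B (tauF k A D M π)

/-- `g_L(ψ)(m ⊗ a) = θ_B(d ↦ ψ(m ⊗ d ⊗ a))`. -/
def gLMap (θB : (D →ₗ[k] B) →ₗ[k] B) :
    ((M ⊗[k] (D ⊗[k] A)) →ₗ[k] B) →ₗ[k] ((M ⊗[k] A) →ₗ[k] B) :=
  (LinearMap.llcomp k (M ⊗[k] A) (D →ₗ[k] B) B θB) ∘ₗ
  (TensorProduct.uncurry (RingHom.id k) M A (D →ₗ[k] B)) ∘ₗ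
  (LinearMap.llcomp k M ((D ⊗[k] A) →ₗ[k] B) (A →ₗ[k] (D →ₗ[k] B))
      (LinearMap.lflip.toLinearMap ∘ₗ TensorProduct.lcurry (RingHom.id k) D A B)) ∘ₗ
  (TensorProduct.lcurry (RingHom.id k) M (D ⊗[k] A) B)

/-- `m ⊗ (d ⊗ a) ↦ m₍₀₎ ⊗ (π(m₍₁₎)d ⊗ a)`. -/
def tauR (π : A →ₗ[k] D) (ρ : M →ₗ[k] M ⊗[k] A) :
    (M ⊗[k] (D ⊗[k] A)) →ₗ[k] (M ⊗[k] (D ⊗[k] A)) :=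
  (TensorProduct.map LinearMap.id
      ((TensorProduct.map (LinearMap.mul' k D) LinearMap.id) ∘ₗ
        (TensorProduct.assoc k D D A).symm.toLinearMap ∘ₗ
        (TensorProduct.map π LinearMap.id))) ∘ₗ
  (TensorProduct.assoc k M A (D ⊗[k] A)).toLinearMap ∘ₗ
  (TensorProduct.map ρ LinearMap.id)

/-- `g_R(ψ)(m ⊗ a) = θ_B(d ↦ ψ(m₍₀₎ ⊗ π(m₍₁₎)d ⊗ a))`. -/
def gRMap (π : A →ₗ[k] D) (ρ : M →ₗ[k] M ⊗[k] A) (θB : (D →ₗ[k] B) →ₗ[k] B) :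
    ((M ⊗[k] (D ⊗[k] A)) →ₗ[k] B) →ₗ[k] ((M ⊗[k] A) →ₗ[k] B) :=
  (gLMap k A D M B θB) ∘ₗ (LinearMap.lcomp k B (tauR k A D M π ρ))

/-- `α(φ)(m ⊗ a) = φ(m₍₀₎ ⊗ S(m₍₁₎)a)`. -/
def alphaMap (ρ : M →ₗ[k] M ⊗[k] A) :
    ((M ⊗[k] A) →ₗ[k] B) →ₗ[k] ((M ⊗[k] A) →ₗ[k] B) :=
  LinearMap.lcomp k B
    ((TensorProduct.map LinearMap.id
        ((LinearMap.mul' k A) ∘ₗ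
          (TensorProduct.map (HopfAlgebra.antipode (R := k)) LinearMap.id))) ∘ₗ
      (TensorProduct.assoc k M A A).toLinearMap ∘ₗ (TensorProduct.map ρ LinearMap.id))

/-- `β(ψ)(m ⊗ a) = ψ(m₍₀₎ ⊗ m₍₁₎a)`. -/
def betaMap (ρ : M →ₗ[k] M ⊗[k] A) :
    ((M ⊗[k] A) →ₗ[k] B) →ₗ[k] ((M ⊗[k] A) →ₗ[k] B) :=
  LinearMap.lcomp k B
    ((TensorProduct.map LinearMap.id (LinearMap.mul' k A)) ∘ₗ
      (TensorProduct.assoc k M A A).toLinearMap ∘ₗ (TensorProduct.map ρ LinearMap.id))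

/-!
For a linear map `φ : A → S` into an algebra let `E_φ : M ⊗ S → M ⊗ S`,
`m ⊗ s ↦ m₍₀₎ ⊗ φ(m₍₁₎) s`. Coassociativity of the coaction gives `E_ψ ∘ E_φ = E_(ψ * φ)` for
the convolution product, and counitality gives `E_1 = id`. Since `α χ = χ ∘ E_S`,
`β χ = χ ∘ E_id` and `S` is the convolution inverse of `id`, `α` and `β` are mutually inverse.

On `M ⊗ D ⊗ A` use the algebra map `λ : A → D ⊗ A`, `a ↦ π(a₍₁₎) ⊗ a₍₂₎`, for which
`f ψ = ψ ∘ (id ⊗ λ)` and `g_R ψ = g_L (ψ ∘ E_(π ⊗ 1))`. The convolution identities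
`(λ ∘ S) * (π ⊗ 1) = 1 ⊗ S` and `(π ⊗ 1) * (1 ⊗ id) = λ`, together with the naturality of `g_L`
in `M ⊗ A`, give explicit preimages:
`α ((f - g_L) ψ) = (f - g_R) (ψ ∘ E_(λ ∘ S))` and `β ((f - g_R) ψ) = (f - g_L) (ψ ∘ E_λ)`.
-/

section CoactionTwist

variable {R A M X Y Z : Type*} [CommSemiring R] [AddCommMonoid A] [Module R A]
  [AddCommMonoid M] [Module R M] [AddCommMonoid X] [Module R X]
  [AddCommMonoid Y] [Module R Y] [AddCommMonoid Z] [Module R Z]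

lemma assoc_tmul_eq_lTensor (t : M ⊗[R] A) (x : X) :
    TensorProduct.assoc R M A X (t ⊗ₜ x) = lTensor M ((TensorProduct.mk R A X).flip x) t := by
  induction t using TensorProduct.induction_on with
  | zero => simp
  | tmul m a => simp
  | add u v hu hv => simp [add_tmul, hu, hv]

/-- `m ⊗ x ↦ m₍₀₎ ⊗ g (m₍₁₎ ⊗ x)`. -/
def coactionTwist (ρ : M →ₗ[R] M ⊗[R] A) (g : A ⊗[R] X →ₗ[R] Y) : M ⊗[R] X →ₗ[R] M ⊗[R] Y :=
  lTensor M g ∘ₗ (TensorProduct.assoc R M A X).toLinearMap ∘ₗ rTensor X ρ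

variable (ρ : M →ₗ[R] M ⊗[R] A)

lemma coactionTwist_tmul (g : A ⊗[R] X →ₗ[R] Y) (m : M) (x : X) :
    coactionTwist ρ g (m ⊗ₜ x) = lTensor M (g ∘ₗ (TensorProduct.mk R A X).flip x) (ρ m) := by
  rw [coactionTwist, comp_apply, comp_apply, rTensor_tmul, LinearEquiv.coe_coe,
    assoc_tmul_eq_lTensor, ← comp_apply (lTensor M g), ← lTensor_comp]

lemma lTensor_comp_coactionTwist (g : A ⊗[R] X →ₗ[R] Y) (h : Y →ₗ[R] Z) :
    lTensor M h ∘ₗ coactionTwist ρ g = coactionTwist ρ (h ∘ₗ g) := by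
  rw [coactionTwist, coactionTwist, lTensor_comp, comp_assoc]

lemma coactionTwist_comp_lTensor (g : A ⊗[R] X →ₗ[R] Y) (e : Z →ₗ[R] X) :
    coactionTwist ρ g ∘ₗ lTensor M e = coactionTwist ρ (g ∘ₗ lTensor A e) := by
  refine TensorProduct.ext' fun m z ↦ ?_
  rw [comp_apply, lTensor_tmul, coactionTwist_tmul, coactionTwist_tmul]
  rfl

section Coalgebra

open Coalgebra

variable [CoalgebraStruct R A]

lemma coactionTwist_comp_of_coassoc
    (hρ : (TensorProduct.assoc R M A A).toLinearMap ∘ₗ rTensor A ρ ∘ₗ ρ = lTensor M comul ∘ₗ ρ)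
    (h : A ⊗[R] A →ₗ[R] Y) :
    coactionTwist ρ h ∘ₗ ρ = lTensor M (h ∘ₗ comul) ∘ₗ ρ := by
  rw [coactionTwist, comp_assoc, comp_assoc, hρ, lTensor_comp, comp_assoc]

lemma coactionTwist_comp_coactionTwist
    (hρ : (TensorProduct.assoc R M A A).toLinearMap ∘ₗ rTensor A ρ ∘ₗ ρ = lTensor M comul ∘ₗ ρ)
    (g : A ⊗[R] X →ₗ[R] Y) (g' : A ⊗[R] Y →ₗ[R] Z) :
    coactionTwist ρ g' ∘ₗ coactionTwist ρ g =
      coactionTwist ρ (g' ∘ₗ lTensor A g ∘ₗ (TensorProduct.assoc R A A X).toLinearMap ∘ₗ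
        rTensor X comul) := by
  refine TensorProduct.ext' fun m x ↦ ?_
  have hcomul : (g' ∘ₗ lTensor A g ∘ₗ (TensorProduct.assoc R A A X).toLinearMap ∘ₗ
        rTensor X comul) ∘ₗ (TensorProduct.mk R A X).flip x =
      (g' ∘ₗ lTensor A (g ∘ₗ (TensorProduct.mk R A X).flip x)) ∘ₗ comul := by
    ext a
    simp [assoc_tmul_eq_lTensor, lTensor_comp_apply]
  rw [comp_apply, coactionTwist_tmul, coactionTwist_tmul, ← comp_apply (coactionTwist ρ g'),
    coactionTwist_comp_lTensor, ← comp_apply _ ρ,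
    coactionTwist_comp_of_coassoc ρ hρ, hcomul, comp_apply]

lemma coactionTwist_counit
    (hρ : (TensorProduct.rid R M).toLinearMap ∘ₗ lTensor M counit ∘ₗ ρ = LinearMap.id) :
    coactionTwist ρ ((TensorProduct.lid R X).toLinearMap ∘ₗ rTensor X counit) = LinearMap.id := by
  refine TensorProduct.ext' fun m x ↦ ?_
  have hcounit : lTensor M (((TensorProduct.lid R X).toLinearMap ∘ₗ rTensor X counit) ∘ₗ
        (TensorProduct.mk R A X).flip x) =
      (TensorProduct.mk R M X).flip x ∘ₗ (TensorProduct.rid R M).toLinearMap ∘ₗ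
        lTensor M counit := by
    ext n a
    simp
  rw [coactionTwist_tmul, id_apply, hcounit]
  exact congr(($hρ m) ⊗ₜ[R] x)

end Coalgebra

lemma coactionTwist_lTensor_comp_leftComm {W : Type*} [AddCommMonoid W] [Module R W]
    (g : A ⊗[R] X →ₗ[R] Y) :
    coactionTwist ρ (lTensor W g ∘ₗ (TensorProduct.leftComm R A W X).toLinearMap) =
      (TensorProduct.leftComm R M W Y).symm.toLinearMap ∘ₗ lTensor W (coactionTwist ρ g) ∘ₗ
        (TensorProduct.leftComm R M W X).toLinearMap := by
  ext m w x
  have key : lTensor M (lTensor W g ∘ₗ (TensorProduct.leftComm R A W X).toLinearMap ∘ₗ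
        (TensorProduct.mk R A (W ⊗[R] X)).flip (w ⊗ₜ x)) =
      (TensorProduct.leftComm R M W Y).symm.toLinearMap ∘ₗ TensorProduct.mk R W (M ⊗[R] Y) w ∘ₗ
        lTensor M (g ∘ₗ (TensorProduct.mk R A X).flip x) := by
    ext n a
    simp
  simpa [coactionTwist_tmul, comp_assoc] using congr($key (ρ m))

end CoactionTwist

section MulLeftTensor

open Coalgebra WithConv

variable {R A S : Type*} [CommSemiring R] [AddCommMonoid A] [Module R A]
  [Semiring S] [Algebra R S]

def mulLeftTensor (φ : A →ₗ[R] S) : A ⊗[R] S →ₗ[R] S := mul' R S ∘ₗ rTensor S φ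

@[simp]
lemma mulLeftTensor_tmul (φ : A →ₗ[R] S) (a : A) (s : S) :
    mulLeftTensor φ (a ⊗ₜ s) = φ a * s := rfl

lemma mulLeftTensor_id : mulLeftTensor (LinearMap.id : S →ₗ[R] S) = mul' R S := by
  rw [mulLeftTensor, rTensor_id, comp_id]

lemma mulLeftTensor_comp_lTensor_algHom {S' : Type*} [Semiring S'] [Algebra R S']
    (h : S →ₐ[R] S') (φ : A →ₗ[R] S) :
    mulLeftTensor (h.toLinearMap ∘ₗ φ) ∘ₗ lTensor A h.toLinearMap =
      h.toLinearMap ∘ₗ mulLeftTensor φ := by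
  ext a s
  simp

lemma mulLeftTensor_includeRight_comp {D : Type*} [Semiring D] [Algebra R D] (φ : A →ₗ[R] S) :
    mulLeftTensor (Algebra.TensorProduct.includeRight.toLinearMap ∘ₗ φ : A →ₗ[R] D ⊗[R] S) =
      lTensor D (mulLeftTensor φ) ∘ₗ (TensorProduct.leftComm R A D S).toLinearMap := by
  ext a d s
  simp

variable [Coalgebra R A]

lemma mulLeftTensor_comp_mulLeftTensor (φ ψ : A →ₗ[R] S) :
    mulLeftTensor ψ ∘ₗ lTensor A (mulLeftTensor φ) ∘ₗ
        (TensorProduct.assoc R A A S).toLinearMap ∘ₗ rTensor S comul =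
      mulLeftTensor (toConv ψ * toConv φ).ofConv := by
  refine TensorProduct.ext' fun a s ↦ ?_
  simp only [comp_apply, rTensor_tmul, LinearEquiv.coe_coe, ← (ℛ R a).eq, sum_tmul, map_sum,
    assoc_tmul, lTensor_tmul, mulLeftTensor_tmul, (ℛ R a).convMul_apply, Finset.sum_mul,
    mul_assoc]

lemma mulLeftTensor_one :
    mulLeftTensor (1 : WithConv (A →ₗ[R] S)).ofConv =
      (TensorProduct.lid R S).toLinearMap ∘ₗ rTensor S counit := by
  ext a s
  simp [Algebra.smul_def]

end MulLeftTensor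

section CoactionTwistConvolution

open Coalgebra WithConv

variable {R A M S : Type*} [CommSemiring R] [AddCommMonoid A] [Module R A] [Coalgebra R A]
  [AddCommMonoid M] [Module R M] [Semiring S] [Algebra R S] (ρ : M →ₗ[R] M ⊗[R] A)

lemma coactionTwist_mulLeftTensor_comp
    (hρ : (TensorProduct.assoc R M A A).toLinearMap ∘ₗ rTensor A ρ ∘ₗ ρ = lTensor M comul ∘ₗ ρ)
    (φ ψ : A →ₗ[R] S) :
    coactionTwist ρ (mulLeftTensor ψ) ∘ₗ coactionTwist ρ (mulLeftTensor φ) =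
      coactionTwist ρ (mulLeftTensor (toConv ψ * toConv φ).ofConv) := by
  rw [coactionTwist_comp_coactionTwist ρ hρ, mulLeftTensor_comp_mulLeftTensor]

lemma coactionTwist_mulLeftTensor_one
    (hρ : (TensorProduct.rid R M).toLinearMap ∘ₗ lTensor M counit ∘ₗ ρ = LinearMap.id) :
    coactionTwist ρ (mulLeftTensor (1 : WithConv (A →ₗ[R] S)).ofConv) = LinearMap.id := by
  rw [mulLeftTensor_one, coactionTwist_counit ρ hρ]

end CoactionTwistConvolution

section AntipodeConvolution

open HopfAlgebra WithConv

variable {R A S : Type*} [CommSemiring R] [Semiring A] [HopfAlgebra R A] [Semiring S]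
  [Algebra R S]

lemma AlgHom.toLinearMap_comp_convOne {C : Type*} [Semiring C] [Bialgebra R C]
    (h : C →ₐ[R] S) :
    h.toLinearMap ∘ₗ (1 : WithConv (C →ₗ[R] C)).ofConv = (1 : WithConv (C →ₗ[R] S)).ofConv := by
  ext c
  simp

lemma algHom_comp_antipode_mul_algHom (h : A →ₐ[R] S) :
    toConv (h.toLinearMap ∘ₗ antipode R) * toConv h.toLinearMap = 1 := by
  have := algHom_comp_convMul_distrib h (toConv (antipode R)) (toConv LinearMap.id)
  rw [antipode_mul_id, AlgHom.toLinearMap_comp_convOne] at this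
  simp only [comp_id] at this
  exact WithConv.ext this.symm

lemma algHom_mul_algHom_comp_antipode (h : A →ₐ[R] S) :
    toConv h.toLinearMap * toConv (h.toLinearMap ∘ₗ antipode R) = 1 := by
  have := algHom_comp_convMul_distrib h (toConv LinearMap.id) (toConv (antipode R))
  rw [id_mul_antipode, AlgHom.toLinearMap_comp_convOne] at this
  simp only [comp_id] at this
  exact WithConv.ext this.symm

end AntipodeConvolution

section LeftCoaction

open Coalgebra HopfAlgebra WithConv

variable {R A D : Type*} [CommSemiring R] [Semiring A] [HopfAlgebra R A] [Semiring D]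
  [Bialgebra R D] (π : A →ₐc[R] D)

def leftCoaction : A →ₐ[R] D ⊗[R] A :=
  (Algebra.TensorProduct.map (π : A →ₐ[R] D) (AlgHom.id R A)).comp (Bialgebra.comulAlgHom R A)

lemma leftCoaction_toLinearMap :
    (leftCoaction π).toLinearMap = rTensor A (π : A →ₗ[R] D) ∘ₗ comul := by
  simp only [leftCoaction, AlgHom.comp_toLinearMap, Algebra.TensorProduct.toLinearMap_map,
    AlgHom.toLinearMap_id, AlgebraTensorModule.map_eq, Bialgebra.toLinearMap_comulAlgHom]
  rfl

lemma includeLeft_comp_mul_includeRight :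
    toConv ((Algebra.TensorProduct.includeLeft (S := R)).toLinearMap ∘ₗ (π : A →ₗ[R] D)) *
      toConv (Algebra.TensorProduct.includeRight.toLinearMap : A →ₗ[R] D ⊗[R] A) =
    toConv (leftCoaction π).toLinearMap := by
  ext a
  simp [(ℛ R a).convMul_apply, leftCoaction_toLinearMap, ← (ℛ R a).eq,
    Algebra.TensorProduct.tmul_mul_tmul]

lemma leftCoaction_comp_antipode_mul_includeLeft_comp :
    toConv ((leftCoaction π).toLinearMap ∘ₗ antipode R) *
      toConv ((Algebra.TensorProduct.includeLeft (S := R)).toLinearMap ∘ₗ (π : A →ₗ[R] D)) =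
    toConv (Algebra.TensorProduct.includeRight.toLinearMap ∘ₗ antipode R : A →ₗ[R] D ⊗[R] A) := by
  have hincl : toConv (leftCoaction π).toLinearMap *
      toConv (Algebra.TensorProduct.includeRight.toLinearMap ∘ₗ antipode R) =
      toConv ((Algebra.TensorProduct.includeLeft (S := R)).toLinearMap ∘ₗ (π : A →ₗ[R] D)) := by
    rw [← includeLeft_comp_mul_includeRight, mul_assoc, algHom_mul_algHom_comp_antipode, mul_one]
  rw [← hincl, ← mul_assoc, algHom_comp_antipode_mul_algHom, one_mul]

end LeftCoaction

section Coequalizers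

open HopfAlgebra Algebra.TensorProduct

variable {k A D M B}

lemma alphaMap_apply (ρ : M →ₗ[k] M ⊗[k] A) (φ : M ⊗[k] A →ₗ[k] B) :
    alphaMap k A M B ρ φ = φ ∘ₗ coactionTwist ρ (mulLeftTensor (antipode k)) :=
  rfl

lemma betaMap_apply (ρ : M →ₗ[k] M ⊗[k] A) (φ : M ⊗[k] A →ₗ[k] B) :
    betaMap k A M B ρ φ = φ ∘ₗ coactionTwist ρ (mulLeftTensor LinearMap.id) := by
  rw [mulLeftTensor_id]
  rfl

lemma fMap_apply (π : A →ₐc[k] D) (ψ : M ⊗[k] (D ⊗[k] A) →ₗ[k] B) :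
    fMap k A D M B π ψ = ψ ∘ₗ lTensor M (leftCoaction π).toLinearMap := by
  rw [leftCoaction_toLinearMap]
  rfl

lemma gRMap_apply (π : A →ₐc[k] D) (ρ : M →ₗ[k] M ⊗[k] A) (θB : (D →ₗ[k] B) →ₗ[k] B)
    (ψ : M ⊗[k] (D ⊗[k] A) →ₗ[k] B) :
    gRMap k A D M B π ρ θB ψ =
      gLMap k A D M B θB (ψ ∘ₗ coactionTwist ρ (mulLeftTensor (includeLeft.toLinearMap ∘ₗ π))) := by
  have h : TensorProduct.map (mul' k D) LinearMap.id ∘ₗ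
        (TensorProduct.assoc k D D A).symm.toLinearMap ∘ₗ TensorProduct.map π LinearMap.id =
      mulLeftTensor (includeLeft.toLinearMap ∘ₗ (π : A →ₗ[k] D) : A →ₗ[k] D ⊗[k] A) := by
    ext a d a'
    simp [tmul_mul_tmul]
  simp only [gRMap, tauR, h]
  rfl

lemma gLMap_apply (θB : (D →ₗ[k] B) →ₗ[k] B) (ψ : M ⊗[k] (D ⊗[k] A) →ₗ[k] B) :
    gLMap k A D M B θB ψ =
      θB ∘ₗ (curry (ψ ∘ₗ (TensorProduct.leftComm k M D A).symm.toLinearMap)).flip := by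
  ext m a : 4
  rfl

lemma gLMap_comp_conj_lTensor (θB : (D →ₗ[k] B) →ₗ[k] B) (ψ : M ⊗[k] (D ⊗[k] A) →ₗ[k] B)
    (h : M ⊗[k] A →ₗ[k] M ⊗[k] A) :
    gLMap k A D M B θB (ψ ∘ₗ (TensorProduct.leftComm k M D A).symm.toLinearMap ∘ₗ lTensor D h ∘ₗ
        (TensorProduct.leftComm k M D A).toLinearMap) =
      gLMap k A D M B θB ψ ∘ₗ h := by
  refine LinearMap.ext fun z ↦ ?_
  simp only [gLMap_apply, comp_apply]
  congr 1
  ext d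
  simp

lemma fMap_comp_coactionTwist (π : A →ₐc[k] D) (ρ : M →ₗ[k] M ⊗[k] A)
    (ψ : M ⊗[k] (D ⊗[k] A) →ₗ[k] B) (φ : A →ₗ[k] A) :
    fMap k A D M B π (ψ ∘ₗ coactionTwist ρ (mulLeftTensor ((leftCoaction π).toLinearMap ∘ₗ φ))) =
      fMap k A D M B π ψ ∘ₗ coactionTwist ρ (mulLeftTensor φ) := by
  rw [fMap_apply, fMap_apply, comp_assoc, comp_assoc, coactionTwist_comp_lTensor,
    mulLeftTensor_comp_lTensor_algHom, lTensor_comp_coactionTwist]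

variable (π : A →ₐc[k] D) {ρ : M →ₗ[k] M ⊗[k] A} (θB : (D →ₗ[k] B) →ₗ[k] B)

lemma alphaMap_fMap_sub_gLMap (hρ : IsComodule k A ρ) (ψ : M ⊗[k] (D ⊗[k] A) →ₗ[k] B) :
    alphaMap k A M B ρ ((fMap k A D M B π - gLMap k A D M B θB) ψ) =
      (fMap k A D M B π - gRMap k A D M B π ρ θB)
        (ψ ∘ₗ coactionTwist ρ (mulLeftTensor ((leftCoaction π).toLinearMap ∘ₗ antipode k))) := by
  have hf := fMap_comp_coactionTwist (B := B) π ρ ψ (antipode k)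
  have hg : gRMap k A D M B π ρ θB
        (ψ ∘ₗ coactionTwist ρ (mulLeftTensor ((leftCoaction π).toLinearMap ∘ₗ antipode k))) =
      gLMap k A D M B θB ψ ∘ₗ coactionTwist ρ (mulLeftTensor (antipode k)) := by
    rw [gRMap_apply, comp_assoc, coactionTwist_mulLeftTensor_comp ρ hρ.1,
      leftCoaction_comp_antipode_mul_includeLeft_comp, WithConv.ofConv_toConv,
      mulLeftTensor_includeRight_comp, coactionTwist_lTensor_comp_leftComm,
      gLMap_comp_conj_lTensor]
  rw [LinearMap.sub_apply, LinearMap.sub_apply, map_sub, hf, hg, alphaMap_apply, alphaMap_apply]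

lemma betaMap_fMap_sub_gRMap (hρ : IsComodule k A ρ) (ψ : M ⊗[k] (D ⊗[k] A) →ₗ[k] B) :
    betaMap k A M B ρ ((fMap k A D M B π - gRMap k A D M B π ρ θB) ψ) =
      (fMap k A D M B π - gLMap k A D M B θB)
        (ψ ∘ₗ coactionTwist ρ (mulLeftTensor (leftCoaction π).toLinearMap)) := by
  have hf := fMap_comp_coactionTwist (B := B) π ρ ψ LinearMap.id
  rw [comp_id] at hf
  have hg : gLMap k A D M B θB
        (ψ ∘ₗ coactionTwist ρ (mulLeftTensor (leftCoaction π).toLinearMap)) =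
      gRMap k A D M B π ρ θB ψ ∘ₗ coactionTwist ρ (mulLeftTensor LinearMap.id) := by
    rw [gRMap_apply, ← gLMap_comp_conj_lTensor, ← coactionTwist_lTensor_comp_leftComm,
      ← mulLeftTensor_includeRight_comp, comp_id, comp_assoc,
      coactionTwist_mulLeftTensor_comp ρ hρ.1, includeLeft_comp_mul_includeRight,
      WithConv.ofConv_toConv]
  rw [LinearMap.sub_apply, LinearMap.sub_apply, map_sub, hf, hg, betaMap_apply, betaMap_apply]

lemma alphaMap_betaMap (hρ : IsComodule k A ρ) (φ : M ⊗[k] A →ₗ[k] B) :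
    alphaMap k A M B ρ (betaMap k A M B ρ φ) = φ := by
  rw [alphaMap_apply, betaMap_apply, comp_assoc, coactionTwist_mulLeftTensor_comp ρ hρ.1,
    id_mul_antipode, coactionTwist_mulLeftTensor_one ρ hρ.2, comp_id]

lemma betaMap_alphaMap (hρ : IsComodule k A ρ) (φ : M ⊗[k] A →ₗ[k] B) :
    betaMap k A M B ρ (alphaMap k A M B ρ φ) = φ := by
  rw [alphaMap_apply, betaMap_apply, comp_assoc, coactionTwist_mulLeftTensor_comp ρ hρ.1,
    antipode_mul_id, coactionTwist_mulLeftTensor_one ρ hρ.2, comp_id]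

end Coequalizers

theorem alpha_beta_preserve_coequalizer_kernels
    (π : A →ₐc[k] D)
    (ρ : M →ₗ[k] M ⊗[k] A) (hM : IsComodule k A ρ)
    (θB : (D →ₗ[k] B) →ₗ[k] B) :
    (∀ x ∈ LinearMap.range (fMap k A D M B (π : A →ₗ[k] D) - gLMap k A D M B θB),
        alphaMap k A M B ρ x ∈
          LinearMap.range (fMap k A D M B (π : A →ₗ[k] D)
            - gRMap k A D M B (π : A →ₗ[k] D) ρ θB)) ∧
    (∀ y ∈ LinearMap.range (fMap k A D M B (π : A →ₗ[k] D)
            - gRMap k A D M B (π : A →ₗ[k] D) ρ θB),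
        betaMap k A M B ρ y ∈
          LinearMap.range (fMap k A D M B (π : A →ₗ[k] D) - gLMap k A D M B θB)) ∧
    ∃ e : (((M ⊗[k] A) →ₗ[k] B) ⧸
            LinearMap.range (fMap k A D M B (π : A →ₗ[k] D) - gLMap k A D M B θB)) ≃ₗ[k]
          (((M ⊗[k] A) →ₗ[k] B) ⧸
            LinearMap.range (fMap k A D M B (π : A →ₗ[k] D)
              - gRMap k A D M B (π : A →ₗ[k] D) ρ θB)),
      ∀ φ : (M ⊗[k] A) →ₗ[k] B,
        e (Submodule.Quotient.mk φ) = Submodule.Quotient.mk (alphaMap k A M B ρ φ) := by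
  have hα : ∀ x ∈ LinearMap.range (fMap k A D M B π - gLMap k A D M B θB),
      alphaMap k A M B ρ x ∈ LinearMap.range (fMap k A D M B π - gRMap k A D M B π ρ θB) := by
    rintro _ ⟨ψ, rfl⟩
    exact ⟨_, (alphaMap_fMap_sub_gLMap π θB hM ψ).symm⟩
  have hβ : ∀ y ∈ LinearMap.range (fMap k A D M B π - gRMap k A D M B π ρ θB),
      betaMap k A M B ρ y ∈ LinearMap.range (fMap k A D M B π - gLMap k A D M B θB) := by
    rintro _ ⟨ψ, rfl⟩
    exact ⟨_, (betaMap_fMap_sub_gRMap π θB hM ψ).symm⟩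
  let α : ((M ⊗[k] A) →ₗ[k] B) ≃ₗ[k] ((M ⊗[k] A) →ₗ[k] B) :=
    LinearEquiv.ofLinearMap (alphaMap k A M B ρ) (betaMap k A M B ρ)
      (LinearMap.ext (alphaMap_betaMap hM)) (LinearMap.ext (betaMap_alphaMap hM))
  have hmap : (LinearMap.range (fMap k A D M B π - gLMap k A D M B θB)).map
      (α : ((M ⊗[k] A) →ₗ[k] B) →ₗ[k] ((M ⊗[k] A) →ₗ[k] B)) =
      LinearMap.range (fMap k A D M B π - gRMap k A D M B π ρ θB) :=
    le_antisymm (Submodule.map_le_iff_le_comap.mpr fun x hx ↦ hα x hx)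
      fun y hy ↦ ⟨betaMap k A M B ρ y, hβ y hy, alphaMap_betaMap hM y⟩
  exact ⟨hα, hβ, Submodule.Quotient.equiv _ _ α hmap, fun φ ↦ rfl⟩

end
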